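/- arXiv:2111.11835 — 2 statements merged into one kernel-verified Lean document; each statement's English description precedes it below -/
import Mathlib

section
/- For a functor Φ : A → V from an additive category to an abelian category and objects A_1, …, A_n of A, there is a natural direct sum decomposition Φ(⊕_{i=1}^n A_i) ≅ ⊕_{s=0}^n ⊕_{1 ≤ j_1 < … < j_s ≤ n} cr_s(Φ)(A_{j_1}, …, A_{j_s}). -/
/-!
Write `e_T` for the idempotent of `⨁ B` projecting onto the summands indexed by `T`, so that
`e_S ≫ e_T = e_{S ∩ T}`. The Möbius transforms `q_S = ∑_{T ⊆ S} (-1)^{|S \ T|} • Φ(e_T)` sum to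
`Φ(e_univ) = 𝟙` by Möbius inversion on the Boolean lattice. Since `q_S` kills `Φ(e_{S \ {i}})`
for `i ∈ S`, it factors through the cross effect of the summands in `S`; conversely `Φ(e_R)` acts
on that cross effect as `𝟙` or `0` according as `S ⊆ R`, so `q_T` acts on it as `δ_{S,T}`. These
maps therefore form a bicone whose total is `𝟙`, i.e. a biproduct.
-/

open CategoryTheory CategoryTheory.Limits

noncomputable instance {V : Type*} [Category V] [Abelian V] : HasFiniteBiproducts V :=
  Abelian.hasFiniteBiproducts

variable {A : Type*} [Category A] [Preadditive A] [HasFiniteBiproducts A]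
variable {V : Type*} [Category V] [Abelian V]

/-- The cross effect `cr_ι(Φ)(B)` of a functor `Φ : A ⥤ V` at a finite family
`B : ι → A`: the kernel of the map `Φ(⨁ᵢ Bᵢ) ⟶ ⨁ᵢ Φ(⨁_{j ≠ i} Bⱼ)` induced by the
canonical projections. -/
noncomputable def crossEffect (Φ : A ⥤ V) {ι : Type} [Fintype ι] [DecidableEq ι]
    (B : ι → A) : V :=
  kernel (biproduct.lift fun i =>
    Φ.map (biproduct.lift fun j : {j : ι // j ≠ i} => biproduct.π B j.1))

namespace Finset

variable {ι : Type*} [DecidableEq ι]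

theorem sum_Icc_neg_one_pow_card_sdiff_left (S T : Finset ι) :
    ∑ R ∈ Icc S T, (-1 : ℤ) ^ #(R \ S) = if S = T then 1 else 0 := by
  by_cases hST : S ⊆ T
  · have hdisj {U} (hU : U ∈ (T \ S).powerset) : Disjoint S U :=
      disjoint_of_subset_right (mem_powerset.1 hU) disjoint_sdiff
    rw [Icc_eq_image_powerset hST, sum_image fun U hU U' hU' h => by
      rw [← union_sdiff_cancel_left (hdisj hU), ← union_sdiff_cancel_left (hdisj hU'), h]]
    calc ∑ U ∈ (T \ S).powerset, (-1 : ℤ) ^ #((S ∪ U) \ S)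
        = ∑ U ∈ (T \ S).powerset, (-1 : ℤ) ^ #U :=
          sum_congr rfl fun U hU => by rw [union_sdiff_cancel_left (hdisj hU)]
      _ = if S = T then 1 else 0 := by
          rw [sum_powerset_neg_one_pow_card]
          exact if_congr (sdiff_eq_empty_iff_subset.trans
            ⟨(subset_antisymm hST ·), fun h => h ▸ subset_rfl⟩) rfl rfl
  · rw [Icc_eq_empty hST, sum_empty, if_neg (by rintro rfl; exact hST subset_rfl)]

/-- `R ↦ S ∪ (T \ R)` is an involution of `Icc S T` exchanging `#(T \ R)` and `#(R \ S)`. -/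
theorem sum_Icc_neg_one_pow_card_sdiff_right (S T : Finset ι) :
    ∑ R ∈ Icc S T, (-1 : ℤ) ^ #(T \ R) = if S = T then 1 else 0 := by
  rw [← sum_Icc_neg_one_pow_card_sdiff_left]
  have hdisj {R} (hR : R ∈ Icc S T) : Disjoint S (T \ R) :=
    disjoint_of_subset_left (mem_Icc.1 hR).1 disjoint_sdiff
  have hmem {R} (hR : R ∈ Icc S T) : S ∪ (T \ R) ∈ Icc S T :=
    mem_Icc.2 ⟨subset_union_left,
      union_subset ((mem_Icc.1 hR).1.trans (mem_Icc.1 hR).2) sdiff_subset⟩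
  have hinv {R} (hR : R ∈ Icc S T) : S ∪ (T \ (S ∪ (T \ R))) = R := by
    obtain ⟨hSR, hRT⟩ := mem_Icc.1 hR
    ext a
    have := @hSR a
    have := @hRT a
    simp only [mem_union, mem_sdiff]
    tauto
  exact sum_nbij' (fun R => S ∪ (T \ R)) (fun R => S ∪ (T \ R)) (fun _ => hmem) (fun _ => hmem)
    (fun _ => hinv) (fun _ => hinv) fun R hR => by rw [union_sdiff_cancel_left (hdisj hR)]

section MobiusTransform

variable {M : Type*} [AddCommGroup M]

def mobiusTransform (f : Finset ι → M) (S : Finset ι) : M :=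
  ∑ T ∈ S.powerset, (-1 : ℤ) ^ #(S \ T) • f T

theorem sum_mobiusTransform [Fintype ι] (f : Finset ι → M) :
    ∑ S, mobiusTransform f S = f univ := by
  simp only [mobiusTransform]
  rw [sum_comm' (t' := univ) (s' := fun T => Icc T univ) fun S T => by simp]
  simp only [← sum_smul, sum_Icc_neg_one_pow_card_sdiff_left, ite_smul, one_smul, zero_smul,
    sum_ite_eq', mem_univ, if_true]

theorem mobiusTransform_ite_subset (S T : Finset ι) (x : M) :
    mobiusTransform (fun R => if S ⊆ R then x else 0) T = if S = T then x else 0 := by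
  simp only [mobiusTransform, smul_ite, smul_zero]
  rw [← sum_filter, ← Icc_eq_filter_powerset, ← sum_smul, sum_Icc_neg_one_pow_card_sdiff_right,
    ite_smul, one_smul, zero_smul]

/-- The terms of `T` and `insert i T` cancel in pairs. -/
theorem mobiusTransform_eq_zero_of_insert {f : Finset ι → M} {S : Finset ι} {i : ι} (hi : i ∈ S)
    (hf : ∀ T, f (insert i T) = f T) : mobiusTransform f S = 0 := by
  have hi' : i ∉ S.erase i := notMem_erase i S
  rw [mobiusTransform, ← insert_erase hi, sum_powerset_insert hi', ← sum_add_distrib]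
  refine sum_eq_zero fun T hT => ?_
  have hiT : i ∉ T := fun h => hi' (mem_powerset.1 hT h)
  have hcard : #(insert i (S.erase i) \ T) = #(insert i (S.erase i) \ insert i T) + 1 := by
    rw [sdiff_insert, card_erase_add_one (mem_sdiff.2 ⟨mem_insert_self i _, hiT⟩)]
  rw [hf, ← add_smul, hcard, pow_succ, mul_neg_one, neg_add_cancel, zero_smul]

end MobiusTransform

end Finset

section Summands

variable {ι : Type} [Fintype ι] [DecidableEq ι] (B : ι → A)

noncomputable def summandIdem (S : Finset ι) : ⨁ B ⟶ ⨁ B :=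
  biproduct.map fun j => if j ∈ S then 𝟙 (B j) else 0

theorem ι_summandIdem (S : Finset ι) (j : ι) :
    biproduct.ι B j ≫ summandIdem B S = if j ∈ S then biproduct.ι B j else 0 := by
  rw [summandIdem, biproduct.ι_map]
  split_ifs <;> simp

theorem summandIdem_π (S : Finset ι) (j : ι) :
    summandIdem B S ≫ biproduct.π B j = if j ∈ S then biproduct.π B j else 0 := by
  rw [summandIdem, biproduct.map_π]
  split_ifs <;> simp

theorem summandIdem_comp (S T : Finset ι) :
    summandIdem B S ≫ summandIdem B T = summandIdem B (S ∩ T) := by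
  refine biproduct.hom_ext' _ _ fun j => ?_
  by_cases hS : j ∈ S <;> by_cases hT : j ∈ T <;>
    simp [reassoc_of% ι_summandIdem, ι_summandIdem, hS, hT]

theorem summandIdem_univ : summandIdem B Finset.univ = 𝟙 (⨁ B) := by
  refine biproduct.hom_ext' _ _ fun j => ?_
  simp [ι_summandIdem]

theorem toSubtype_comp_fromSubtype_eq_summandIdem (S : Finset ι) :
    biproduct.toSubtype B (· ∈ S) ≫ biproduct.fromSubtype B (· ∈ S) = summandIdem B S :=
  biproduct.toSubtype_fromSubtype B _

end Summands

section Decomposition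

variable (Φ : A ⥤ V) {ι : Type} [Fintype ι] [DecidableEq ι] (B : ι → A)

noncomputable def crossEffectMap :
    Φ.obj (⨁ B) ⟶ ⨁ fun i => Φ.obj (⨁ Subtype.restrict (· ≠ i) B) :=
  biproduct.lift fun i => Φ.map (biproduct.toSubtype B (· ≠ i))

noncomputable def crossEffectι : crossEffect Φ B ⟶ Φ.obj (⨁ B) :=
  kernel.ι (crossEffectMap Φ B)

theorem crossEffectι_map_toSubtype (i : ι) :
    crossEffectι Φ B ≫ Φ.map (biproduct.toSubtype B (· ≠ i)) = 0 := by
  have h := kernel.condition (crossEffectMap Φ B) =≫ biproduct.π _ i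
  rwa [zero_comp, Category.assoc, crossEffectMap, biproduct.lift_π] at h

/-- Such an `f` factors through `biproduct.toSubtype B (· ≠ i)`, the cokernel of `ι B i`. -/
theorem crossEffectι_map_eq_zero {Y : A} (f : ⨁ B ⟶ Y) (i : ι) (hf : biproduct.ι B i ≫ f = 0) :
    crossEffectι Φ B ≫ Φ.map f = 0 := by
  obtain ⟨g, hg⟩ := CokernelCofork.IsColimit.desc' (biproduct.isColimitToSubtype B i) f hf
  rw [← hg, Cofork.π_ofπ, Φ.map_comp, ← Category.assoc, crossEffectι_map_toSubtype, zero_comp]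

theorem crossEffectι_map_fromSubtype_comp_summandIdem (S R : Finset ι) :
    crossEffectι Φ (Subtype.restrict (· ∈ S) B) ≫
        Φ.map (biproduct.fromSubtype B (· ∈ S) ≫ summandIdem B R) =
      if S ⊆ R then
        crossEffectι Φ (Subtype.restrict (· ∈ S) B) ≫ Φ.map (biproduct.fromSubtype B (· ∈ S))
      else 0 := by
  split_ifs with h
  · congr 2
    refine biproduct.hom_ext' _ _ fun j => ?_
    simp only [biproduct.ι_fromSubtype_assoc, biproduct.ι_fromSubtype]
    exact (ι_summandIdem B R j).trans (if_pos (h j.2))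
  · obtain ⟨i, hiS, hiR⟩ := Finset.not_subset.1 h
    exact crossEffectι_map_eq_zero Φ _ _ ⟨i, hiS⟩
      (by rw [biproduct.ι_fromSubtype_assoc]; exact (ι_summandIdem B R i).trans (if_neg hiR))

instance : Mono (crossEffectι Φ B) := inferInstanceAs (Mono (kernel.ι _))

noncomputable def crossEffectIdem (S : Finset ι) : Φ.obj (⨁ B) ⟶ Φ.obj (⨁ B) :=
  Finset.mobiusTransform (fun T => Φ.map (summandIdem B T)) S

theorem sum_crossEffectIdem : ∑ S, crossEffectIdem Φ B S = 𝟙 (Φ.obj (⨁ B)) := by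
  simp only [crossEffectIdem]
  rw [Finset.sum_mobiusTransform, summandIdem_univ, Φ.map_id]

theorem crossEffectIdem_comp_map_summandIdem (S R : Finset ι) :
    crossEffectIdem Φ B S ≫ Φ.map (summandIdem B R) =
      Finset.mobiusTransform (fun T => Φ.map (summandIdem B (T ∩ R))) S := by
  simp only [crossEffectIdem, Finset.mobiusTransform, Preadditive.sum_comp,
    Preadditive.zsmul_comp, ← Φ.map_comp, summandIdem_comp]

theorem crossEffectIdem_comp_map_summandIdem_self (S : Finset ι) :
    crossEffectIdem Φ B S ≫ Φ.map (summandIdem B S) = crossEffectIdem Φ B S := by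
  rw [crossEffectIdem_comp_map_summandIdem]
  exact Finset.sum_congr rfl fun T hT => by
    simp only [Finset.inter_eq_left.2 (Finset.mem_powerset.1 hT)]

theorem crossEffectIdem_comp_map_eq_zero {S : Finset ι} {i : ι} (hi : i ∈ S) {Y : A}
    (f : ⨁ B ⟶ Y) (hf : summandIdem B (S.erase i) ≫ f = f) :
    crossEffectIdem Φ B S ≫ Φ.map f = 0 := by
  rw [← hf, Φ.map_comp, ← Category.assoc, crossEffectIdem_comp_map_summandIdem,
    Finset.mobiusTransform_eq_zero_of_insert hi fun T => by
      rw [Finset.insert_inter_of_notMem (Finset.notMem_erase i S)], zero_comp]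

theorem crossEffectIdem_comp_map_toSubtype_comp_crossEffectMap (S : Finset ι) :
    (crossEffectIdem Φ B S ≫ Φ.map (biproduct.toSubtype B (· ∈ S))) ≫
      crossEffectMap Φ (Subtype.restrict (· ∈ S) B) = 0 := by
  refine biproduct.hom_ext _ _ fun i => ?_
  rw [Category.assoc, Category.assoc, crossEffectMap, biproduct.lift_π, ← Φ.map_comp, zero_comp]
  refine crossEffectIdem_comp_map_eq_zero Φ B i.2 _ (biproduct.hom_ext _ _ fun j => ?_)
  have hj : (j : S).1 ∈ S.erase i := Finset.mem_erase.2 ⟨fun h => j.2 (Subtype.ext h), j.1.2⟩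
  simp only [Category.assoc, biproduct.toSubtype_π]
  -- `rw` cannot see through the nested `Subtype.restrict` in the types of the projections.
  exact (summandIdem B _ ≫= biproduct.toSubtype_π B _ j.1).trans
    (((summandIdem_π B _ _).trans (if_pos hj)).trans (biproduct.toSubtype_π B _ j.1).symm)

noncomputable def crossEffectIncl (S : Finset ι) :
    crossEffect Φ (Subtype.restrict (· ∈ S) B) ⟶ Φ.obj (⨁ B) :=
  crossEffectι Φ _ ≫ Φ.map (biproduct.fromSubtype B (· ∈ S))

noncomputable def crossEffectProj (S : Finset ι) :
    Φ.obj (⨁ B) ⟶ crossEffect Φ (Subtype.restrict (· ∈ S) B) :=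
  kernel.lift _ _ (crossEffectIdem_comp_map_toSubtype_comp_crossEffectMap Φ B S)

theorem crossEffectProj_comp_crossEffectι (S : Finset ι) :
    crossEffectProj Φ B S ≫ crossEffectι Φ _ =
      crossEffectIdem Φ B S ≫ Φ.map (biproduct.toSubtype B (· ∈ S)) :=
  kernel.lift_ι _ _ _

theorem crossEffectIncl_comp_crossEffectIdem (S T : Finset ι) :
    crossEffectIncl Φ B S ≫ crossEffectIdem Φ B T =
      if S = T then crossEffectIncl Φ B S else 0 := by
  calc crossEffectIncl Φ B S ≫ crossEffectIdem Φ B T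
      = Finset.mobiusTransform (fun R => crossEffectIncl Φ B S ≫ Φ.map (summandIdem B R)) T := by
        simp only [crossEffectIdem, Finset.mobiusTransform, Preadditive.comp_sum,
          Preadditive.comp_zsmul]
    _ = Finset.mobiusTransform (fun R => if S ⊆ R then crossEffectIncl Φ B S else 0) T := by
        simp only [crossEffectIncl, Category.assoc, ← Φ.map_comp,
          crossEffectι_map_fromSubtype_comp_summandIdem]
    _ = if S = T then crossEffectIncl Φ B S else 0 := Finset.mobiusTransform_ite_subset S T _

theorem crossEffectIncl_comp_crossEffectProj (S T : Finset ι) :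
    crossEffectIncl Φ B S ≫ crossEffectProj Φ B T =
      if h : S = T then eqToHom (by rw [h]) else 0 := by
  rw [← cancel_mono (crossEffectι Φ _), Category.assoc, crossEffectProj_comp_crossEffectι,
    ← Category.assoc, crossEffectIncl_comp_crossEffectIdem]
  split_ifs with h
  · subst h
    rw [crossEffectIncl, Category.assoc, ← Φ.map_comp, biproduct.fromSubtype_toSubtype, Φ.map_id,
      Category.comp_id, eqToHom_refl, Category.id_comp]
  · rw [zero_comp, zero_comp]

theorem sum_crossEffectProj_comp_crossEffectIncl :
    ∑ S, crossEffectProj Φ B S ≫ crossEffectIncl Φ B S = 𝟙 (Φ.obj (⨁ B)) := by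
  refine (Finset.sum_congr rfl fun S _ => ?_).trans (sum_crossEffectIdem Φ B)
  rw [crossEffectIncl, ← Category.assoc, crossEffectProj_comp_crossEffectι, Category.assoc,
    ← Φ.map_comp, toSubtype_comp_fromSubtype_eq_summandIdem,
    crossEffectIdem_comp_map_summandIdem_self]

noncomputable def crossEffectBicone :
    Bicone fun S : Finset ι => crossEffect Φ (Subtype.restrict (· ∈ S) B) where
  pt := Φ.obj (⨁ B)
  π := crossEffectProj Φ B
  ι := crossEffectIncl Φ B
  ι_π S T := (crossEffectIncl_comp_crossEffectProj Φ B S T).trans (by congr)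

end Decomposition

/-- The natural direct sum decomposition
`Φ(⊕_{i=1}^n Aᵢ) ≅ ⊕_{s=0}^n ⊕_{j₁ < ⋯ < j_s} cr_s(Φ)(A_{j₁}, …, A_{j_s})`,
where the right-hand side is indexed by the subsets `S ⊆ {1,…,n}`. -/
theorem crossEffect_decomposition (Φ : A ⥤ V) (n : ℕ) (As : Fin n → A) :
    Nonempty (Φ.obj (⨁ As) ≅ ⨁ fun S : Finset (Fin n) =>
      crossEffect Φ (fun j : S => As j)) :=
  ⟨biproduct.uniqueUpToIso _
    (isBilimitOfTotal (crossEffectBicone Φ As) (sum_crossEffectProj_comp_crossEffectIncl Φ As))⟩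
end

section
/- Let C = ⟨t⟩ be the infinite cyclic group, I the augmentation ideal of Q[C] = Q[t, t⁻¹], and M = Q[C] ⊗ V a free Q[C]-module on a finite-dimensional Q-vector space V. Then for every n ≥ 1, H_1(C, Λⁿ(M)) = 0, i.e. the n-th exterior power of M has no nonzero invariants under the action of t. -/
open scoped TensorProduct

/-!
The coaction `t^k ⊗ v ↦ t^k ⊗ (t^k ⊗ v)` of `ℚ[t,t⁻¹]` on `M = ℚ[t,t⁻¹] ⊗ V` extends to an algebra
map `Θ : Λ M → ℚ[t,t⁻¹] ⊗ Λ M` recording the total `t`-degree; it is injective because evaluation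
at `t = 1` is a left inverse. Multiplication by `t` raises the `t`-degree of every vector by one,
hence that of an element of `Λⁿ M` by `n`: `Θ (Λ(t) x) = (t^n ⊗ Λ(t)) (Θ x)`. For an invariant `x`
the finitely supported coefficient sequence of `Θ x` is therefore carried to itself by a shift by
`n ≥ 1` (followed by `Λ(t)`), so it vanishes at its lowest degree and `Θ x = 0`.
-/

namespace ExteriorAlgebra

variable {R M : Type*} [CommRing R] [AddCommGroup M] [Module R M]
variable (A : Type*) [CommRing A] [Algebra R A]

theorem lTensor_ι_mul_add_swap (y y' : A ⊗[R] M) :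
    (ι R).lTensor A y * (ι R).lTensor A y' + (ι R).lTensor A y' * (ι R).lTensor A y = 0 := by
  induction y using TensorProduct.induction_on with
  | zero => simp
  | add y₁ y₂ h₁ h₂ => rw [map_add, add_mul, mul_add, add_add_add_comm, h₁, h₂, add_zero]
  | tmul a m =>
    induction y' using TensorProduct.induction_on with
    | zero => simp
    | add y₁ y₂ h₁ h₂ => rw [map_add, add_mul, mul_add, add_add_add_comm, h₁, h₂, add_zero]
    | tmul b m' =>
      rw [LinearMap.lTensor_tmul, LinearMap.lTensor_tmul, Algebra.TensorProduct.tmul_mul_tmul,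
        Algebra.TensorProduct.tmul_mul_tmul, mul_comm b a, ← TensorProduct.tmul_add,
        ι_add_mul_swap, TensorProduct.tmul_zero]

theorem lTensor_ι_mul_self (y : A ⊗[R] M) : (ι R).lTensor A y * (ι R).lTensor A y = 0 := by
  induction y using TensorProduct.induction_on with
  | zero => simp
  | add y₁ y₂ h₁ h₂ =>
    rw [map_add, add_mul, mul_add, mul_add, h₁, h₂, zero_add, add_zero, lTensor_ι_mul_add_swap]
  | tmul a m =>
    rw [LinearMap.lTensor_tmul, Algebra.TensorProduct.tmul_mul_tmul, ι_sq_zero,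
      TensorProduct.tmul_zero]

theorem algHom_eq_pow_mul_of_mem_exteriorPower {B : Type*} [Semiring B] [Algebra R B]
    (F G : ExteriorAlgebra R M →ₐ[R] B) (c : B) (hc : ∀ b, Commute c b)
    (h : ∀ m, F (ι R m) = c * G (ι R m)) {n : ℕ} {z : ExteriorAlgebra R M}
    (hz : z ∈ ⋀[R]^n M) : F z = c ^ n * G z := by
  rw [← ιMulti_span_fixedDegree] at hz
  induction hz using Submodule.span_induction with
  | zero => simp
  | add a b _ _ ha hb => rw [map_add, map_add, ha, hb, mul_add]
  | smul r a _ ha => rw [map_smul, map_smul, ha, mul_smul_comm]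
  | mem z hz =>
    obtain ⟨m, rfl⟩ := hz
    induction n with
    | zero => simp
    | succ n ih =>
      rw [ιMulti_succ_apply, map_mul, map_mul, h, ih, pow_succ', mul_assoc, mul_assoc,
        ← mul_assoc (G _), ← ((hc _).pow_left n).eq, mul_assoc]

end ExteriorAlgebra

theorem Finsupp.eq_zero_of_forall_apply_eq_apply_sub {E : Type*} [Zero E] {f : ℤ →₀ E}
    {g : E → E} (hg : g 0 = 0) {n : ℤ} (hn : 0 < n) (h : ∀ k, f k = g (f (k - n))) : f = 0 := by
  by_contra hf
  have hne : f.support.Nonempty := Finsupp.support_nonempty_iff.mpr hf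
  have hmin : f (f.support.min' hne) ≠ 0 := Finsupp.mem_support_iff.mp (f.support.min'_mem hne)
  have hbelow : f (f.support.min' hne - n) = 0 := Finsupp.notMem_support_iff.mp fun hmem => by
    have := f.support.min'_le _ hmem
    omega
  exact hmin (by rw [h, hbelow, hg])

namespace LaurentPolynomial

open ExteriorAlgebra

variable {R V : Type*} [CommRing R] [AddCommGroup V] [Module R V]

theorem tensor_linearMap_ext {N : Type*} [AddCommGroup N] [Module R N]
    {f g : R[T;T⁻¹] ⊗[R] V →ₗ[R] N} (h : ∀ k v, f (T k ⊗ₜ v) = g (T k ⊗ₜ v)) : f = g := by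
  ext k v
  exact h k v

variable (R V)

noncomputable def tensorCoaction : R[T;T⁻¹] ⊗[R] V →ₗ[R] R[T;T⁻¹] ⊗[R] (R[T;T⁻¹] ⊗[R] V) :=
  (TensorProduct.assoc R _ _ V).toLinearMap ∘ₗ Coalgebra.comul.rTensor V

variable {R V} in
theorem tensorCoaction_T_tmul (k : ℤ) (v : V) :
    tensorCoaction R V (T k ⊗ₜ v) = T k ⊗ₜ (T k ⊗ₜ v) := by
  simp [tensorCoaction, comul_T]

noncomputable def exteriorCoaction : ExteriorAlgebra R (R[T;T⁻¹] ⊗[R] V) →ₐ[R]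
    R[T;T⁻¹] ⊗[R] ExteriorAlgebra R (R[T;T⁻¹] ⊗[R] V) :=
  lift R ⟨(ι R).lTensor _ ∘ₗ tensorCoaction R V, fun _ => lTensor_ι_mul_self _ _⟩

variable {R V} in
theorem exteriorCoaction_ι_T_tmul (k : ℤ) (v : V) :
    exteriorCoaction R V (ι R (T k ⊗ₜ v)) = T k ⊗ₜ ι R (T k ⊗ₜ v) := by
  simp [exteriorCoaction, tensorCoaction_T_tmul]

theorem exteriorCoaction_injective : Function.Injective (exteriorCoaction R V) := by
  let ε := (Algebra.TensorProduct.lid R (ExteriorAlgebra R (R[T;T⁻¹] ⊗[R] V))).toAlgHom.comp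
    (Algebra.TensorProduct.map (Bialgebra.counitAlgHom R R[T;T⁻¹]) (AlgHom.id R _))
  have hε : ε.comp (exteriorCoaction R V) = AlgHom.id R _ := by
    ext k v
    simp [ε, exteriorCoaction_ι_T_tmul, counit_T]
  exact Function.LeftInverse.injective (g := ε) fun x => congr($hε x)

variable {R V}

theorem T_tmul_one_mul_map {E : Type*} [Ring E] [Algebra R E] (a : R[T;T⁻¹]) (g : E →ₐ[R] E)
    (w : R[T;T⁻¹] ⊗[R] E) :
    (a ⊗ₜ 1) * Algebra.TensorProduct.map (AlgHom.id R _) g w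
      = TensorProduct.map (LinearMap.mulLeft R a) g.toLinearMap w := by
  induction w using TensorProduct.induction_on with
  | zero => simp
  | add w₁ w₂ h₁ h₂ => rw [map_add, mul_add, h₁, h₂, map_add]
  | tmul b e => simp

local notation "φ" =>
  TensorProduct.map (LinearMap.mulLeft R (T 1 : R[T;T⁻¹])) (LinearMap.id : V →ₗ[R] V)

theorem exteriorCoaction_map_of_mem_exteriorPower {n : ℕ}
    {z : ExteriorAlgebra R (R[T;T⁻¹] ⊗[R] V)} (hz : z ∈ ⋀[R]^n (R[T;T⁻¹] ⊗[R] V)) :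
    exteriorCoaction R V (ExteriorAlgebra.map φ z)
      = TensorProduct.map (LinearMap.mulLeft R (T n)) (ExteriorAlgebra.map φ).toLinearMap
          (exteriorCoaction R V z) := by
  let Ψ := Algebra.TensorProduct.map (AlgHom.id R R[T;T⁻¹]) (ExteriorAlgebra.map φ)
  have hcentral : ∀ b : R[T;T⁻¹] ⊗[R] ExteriorAlgebra R (R[T;T⁻¹] ⊗[R] V),
      Commute (T 1 ⊗ₜ 1) b := fun b => by
    simpa using Algebra.commute_algebraMap_left (T 1 : R[T;T⁻¹]) b
  have hgen : ((exteriorCoaction R V).comp (ExteriorAlgebra.map φ)).toLinearMap ∘ₗ ι R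
      = LinearMap.mulLeft R (T 1 ⊗ₜ 1) ∘ₗ (Ψ.comp (exteriorCoaction R V)).toLinearMap ∘ₗ ι R := by
    refine tensor_linearMap_ext fun k v => ?_
    simp only [Ψ, LinearMap.comp_apply, AlgHom.toLinearMap_apply, AlgHom.comp_apply, map_apply_ι,
      exteriorCoaction_ι_T_tmul, TensorProduct.map_tmul, LinearMap.mulLeft_apply,
      LinearMap.id_apply, Algebra.TensorProduct.map_tmul, AlgHom.id_apply,
      Algebra.TensorProduct.tmul_mul_tmul, one_mul, ← T_add]
  rw [← AlgHom.comp_apply, algHom_eq_pow_mul_of_mem_exteriorPower _ (Ψ.comp (exteriorCoaction R V))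
    _ hcentral (fun m => LinearMap.congr_fun hgen m) hz, Algebra.TensorProduct.tmul_pow, one_pow,
    T_pow, mul_one, AlgHom.comp_apply, T_tmul_one_mul_map]

theorem coeff_mul_T {S : Type*} [Semiring S] (f : S[T;T⁻¹]) (n k : ℤ) :
    (f * T n).coeff k = f.coeff (k - n) := by
  rw [T, AddMonoidAlgebra.coeff_mul_single_apply, mul_one, sub_eq_add_neg]

theorem tensor_eq_zero_of_map_mulLeft_T_eq_self {E : Type*} [AddCommGroup E] [Module R E]
    {g : E →ₗ[R] E} {n : ℤ} (hn : 0 < n) {y : R[T;T⁻¹] ⊗[R] E}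
    (hy : TensorProduct.map (LinearMap.mulLeft R (T n)) g y = y) : y = 0 := by
  let e : R[T;T⁻¹] ⊗[R] E ≃ₗ[R] (ℤ →₀ E) :=
    (TensorProduct.congr (AddMonoidAlgebra.coeffLinearEquiv R) (LinearEquiv.refl R E)).trans
      (TensorProduct.finsuppScalarLeft R E ℤ)
  have he : ∀ w k, e (TensorProduct.map (LinearMap.mulLeft R (T n)) g w) k = g (e w (k - n)) := by
    intro w k
    induction w using TensorProduct.induction_on with
    | zero => simp
    | add w₁ w₂ h₁ h₂ => simp only [map_add, Finsupp.add_apply, h₁, h₂]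
    | tmul f x => simp [e, TensorProduct.finsuppScalarLeft_apply_tmul_apply, coeff_mul_T]
  have : e y = 0 := Finsupp.eq_zero_of_forall_apply_eq_apply_sub (map_zero g) hn
    fun k => by rw [← he, hy]
  exact e.map_eq_zero_iff.mp this

end LaurentPolynomial

theorem exteriorPower_laurent_tensor_no_invariants_general
    (V : Type) [AddCommGroup V] [Module ℚ V]
    (n : ℕ) (hn : 1 ≤ n)
    (x : ExteriorAlgebra ℚ (LaurentPolynomial ℚ ⊗[ℚ] V))
    (hx : x ∈ ⋀[ℚ]^n (LaurentPolynomial ℚ ⊗[ℚ] V))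
    (hinv : ExteriorAlgebra.map
      (TensorProduct.map (LinearMap.mulLeft ℚ (LaurentPolynomial.T 1))
        (LinearMap.id : V →ₗ[ℚ] V)) x = x) :
    x = 0 := by
  have hfixed := LaurentPolynomial.exteriorCoaction_map_of_mem_exteriorPower hx
  rw [hinv] at hfixed
  refine LaurentPolynomial.exteriorCoaction_injective ℚ V ?_
  rw [map_zero]
  exact LaurentPolynomial.tensor_eq_zero_of_map_mulLeft_T_eq_self (by exact_mod_cast hn) hfixed.symm

/-- For the free `ℚ[C]`-module `M = ℚ[t,t⁻¹] ⊗ V` on a finite-dimensional `ℚ`-vector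
space `V`, and any `n ≥ 1`, the `n`-th exterior power `Λⁿ M` has no nonzero invariants
under the (diagonal) action of `t`; equivalently `H₁(C, Λⁿ M) = 0` for the infinite
cyclic group `C = ⟨t⟩`. -/
theorem exteriorPower_laurent_tensor_no_invariants
    (V : Type) [AddCommGroup V] [Module ℚ V] [FiniteDimensional ℚ V]
    (n : ℕ) (hn : 1 ≤ n)
    (x : ExteriorAlgebra ℚ (LaurentPolynomial ℚ ⊗[ℚ] V))
    (hx : x ∈ ⋀[ℚ]^n (LaurentPolynomial ℚ ⊗[ℚ] V))
    (hinv : ExteriorAlgebra.map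
      (TensorProduct.map (LinearMap.mulLeft ℚ (LaurentPolynomial.T 1))
        (LinearMap.id : V →ₗ[ℚ] V)) x = x) :
    x = 0 :=
  exteriorPower_laurent_tensor_no_invariants_general V n hn x hx hinv
end
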